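/- arXiv:1109.3429 — 2 statements merged into one kernel-verified Lean document; each statement's English description precedes it below -/
import Mathlib

section
/- The bicomplex Schwarz inequality holds: for all |ψ⟩, |φ⟩ in a bicomplex inner product space M, |⟨ψ|φ⟩| ≤ √2·‖ψ‖·‖φ‖, where |·| is the Euclidean norm on bicomplex numbers and ‖·‖ the induced norm on M. -/
/-- Bicomplex numbers `w = z₁ + z₂ i₂` with `z₁ z₂ ∈ ℂ(i₁)`. -/
@[ext] structure BC where
  re : ℂ
  im : ℂ

namespace BC

instance : Zero BC := ⟨⟨0, 0⟩⟩
instance : One BC := ⟨⟨1, 0⟩⟩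
instance : Add BC := ⟨fun s t => ⟨s.re + t.re, s.im + t.im⟩⟩
instance : Neg BC := ⟨fun s => ⟨-s.re, -s.im⟩⟩
instance : Mul BC := ⟨fun s t => ⟨s.re * t.re - s.im * t.im, s.re * t.im + s.im * t.re⟩⟩

@[simp] theorem zero_re : (0 : BC).re = 0 := rfl
@[simp] theorem zero_im : (0 : BC).im = 0 := rfl
@[simp] theorem one_re : (1 : BC).re = 1 := rfl
@[simp] theorem one_im : (1 : BC).im = 0 := rfl
@[simp] theorem add_re (s t : BC) : (s + t).re = s.re + t.re := rfl
@[simp] theorem add_im (s t : BC) : (s + t).im = s.im + t.im := rfl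
@[simp] theorem neg_re (s : BC) : (-s).re = -s.re := rfl
@[simp] theorem neg_im (s : BC) : (-s).im = -s.im := rfl
@[simp] theorem mul_re (s t : BC) : (s * t).re = s.re * t.re - s.im * t.im := rfl
@[simp] theorem mul_im (s t : BC) : (s * t).im = s.re * t.im + s.im * t.re := rfl

instance commRing : CommRing BC where
  add_assoc a b c := by ext <;> simp <;> ring
  zero_add a := by ext <;> simp
  add_zero a := by ext <;> simp
  add_comm a b := by ext <;> simp <;> ring
  left_distrib a b c := by ext <;> simp <;> ring
  right_distrib a b c := by ext <;> simp <;> ring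
  zero_mul a := by ext <;> simp
  mul_zero a := by ext <;> simp
  mul_assoc a b c := by ext <;> simp <;> ring
  one_mul a := by ext <;> simp
  mul_one a := by ext <;> simp
  neg_add_cancel a := by ext <;> simp
  mul_comm a b := by ext <;> simp <;> ring
  nsmul := nsmulRec
  zsmul := zsmulRec

/-- The imaginary unit `i₁`. -/
def i1 : BC := ⟨Complex.I, 0⟩
/-- The imaginary unit `i₂`. -/
def i2 : BC := ⟨0, 1⟩
/-- The hyperbolic unit `j = i₁ i₂`. -/
def jh : BC := i1 * i2
/-- The idempotent `e₁ = (1 + j)/2`. -/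
noncomputable def e1 : BC := ⟨1/2, Complex.I/2⟩
/-- The idempotent `e₂ = (1 - j)/2`. -/
noncomputable def e2 : BC := ⟨1/2, -(Complex.I/2)⟩
/-- The embedding of `ℂ(i₁)` into the bicomplex numbers. -/
def C1 (z : ℂ) : BC := ⟨z, 0⟩
/-- First idempotent component `ẑ₁ = z₁ - z₂ i₁`. -/
def P1 (w : BC) : ℂ := w.re - w.im * Complex.I
/-- Second idempotent component `ẑ₂ = z₁ + z₂ i₁`. -/
def P2 (w : BC) : ℂ := w.re + w.im * Complex.I
/-- The Euclidean `ℝ⁴`-norm `|w| = √(|z₁|² + |z₂|²)`. -/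
noncomputable def enorm (w : BC) : ℝ := Real.sqrt (‖w.re‖ ^ 2 + ‖w.im‖ ^ 2)
/-- The conjugation `w^{†₁} = z̄₁ + z̄₂ i₂`. -/
def dag1 (w : BC) : BC := ⟨starRingEnd ℂ w.re, starRingEnd ℂ w.im⟩
/-- The conjugation `w^{†₂} = z₁ - z₂ i₂`. -/
def dag2 (w : BC) : BC := ⟨w.re, -w.im⟩
/-- The conjugation `w^{†₃} = z̄₁ - z̄₂ i₂`. -/
def dag3 (w : BC) : BC := ⟨starRingEnd ℂ w.re, -(starRingEnd ℂ w.im)⟩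

end BC

/-- A bicomplex scalar product on a module over the bicomplex numbers. -/
structure BCInner (M : Type*) [AddCommGroup M] [Module BC M] where
  inner : M → M → BC
  add_right : ∀ ψ φ χ : M, inner ψ (φ + χ) = inner ψ φ + inner ψ χ
  smul_right : ∀ (s : BC) (ψ φ : M), inner ψ (s • φ) = s * inner ψ φ
  conj_symm : ∀ ψ φ : M, inner ψ φ = BC.dag3 (inner φ ψ)
  hyper_pos : ∀ ψ : M, (BC.P1 (inner ψ ψ)).im = 0 ∧ 0 ≤ (BC.P1 (inner ψ ψ)).re ∧
      (BC.P2 (inner ψ ψ)).im = 0 ∧ 0 ≤ (BC.P2 (inner ψ ψ)).re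
  definite : ∀ ψ : M, inner ψ ψ = 0 → ψ = 0

/-- The norm induced by a bicomplex scalar product:
`‖φ‖ = (1/√2) √((φ₁,φ₁)₁ + (φ₂,φ₂)₂) = |√((φ,φ))|`. -/
noncomputable def bnorm {M : Type*} [AddCommGroup M] [Module BC M] (S : BCInner M) (φ : M) : ℝ :=
  (1 / Real.sqrt 2) * Real.sqrt ((BC.P1 (S.inner φ φ)).re + (BC.P2 (S.inner φ φ)).re)

/-- Completeness of a bicomplex inner product space with respect to the induced norm. -/
def BCComplete {M : Type*} [AddCommGroup M] [Module BC M] (S : BCInner M) : Prop :=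
  ∀ f : ℕ → M, (∀ ε > 0, ∃ N : ℕ, ∀ m ≥ N, ∀ n ≥ N, bnorm S (f m - f n) < ε) →
    ∃ φ : M, Filter.Tendsto (fun n => bnorm S (f n - φ)) Filter.atTop (nhds 0)

/-- Separability: existence of a countable dense subset. -/
def BCSeparable {M : Type*} [AddCommGroup M] [Module BC M] (S : BCInner M) : Prop :=
  ∃ D : Set M, D.Countable ∧ ∀ φ : M, ∀ ε > 0, ∃ ψ ∈ D, bnorm S (φ - ψ) < ε


/-! Each idempotent component `P₁, P₂ : BC →+* ℂ` turns `†₃` into complex conjugation, so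
`P_k ∘ S.inner` is a complex pre-inner product on `M`, viewed as a complex vector space through
`C1 : ℂ → BC`, and satisfies the ordinary Cauchy–Schwarz inequality. Since
`|w|² = (|P₁ w|² + |P₂ w|²) / 2` and `2 ‖φ‖² = Re P₁ (φ, φ) + Re P₂ (φ, φ)`, adding the two
component inequalities gives the claim. -/

namespace BC

open ComplexConjugate

theorem dag3_add (s t : BC) : dag3 (s + t) = dag3 s + dag3 t := by
  ext <;> simp [dag3]; ring

theorem dag3_mul (s t : BC) : dag3 (s * t) = dag3 s * dag3 t := by
  ext <;> simp [dag3]; ring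

@[simps]
def C1Hom : ℂ →+* BC where
  toFun := C1
  map_one' := rfl
  map_mul' z w := by ext <;> simp [C1]
  map_zero' := rfl
  map_add' z w := by ext <;> simp [C1]

@[simps]
def P1Hom : BC →+* ℂ where
  toFun := P1
  map_one' := by simp [P1]
  map_mul' s t := by
    simp only [P1, mul_re, mul_im]
    linear_combination (-(s.im * t.im)) * Complex.I_sq
  map_zero' := by simp [P1]
  map_add' s t := by simp only [P1, add_re, add_im]; ring

@[simps]
def P2Hom : BC →+* ℂ where
  toFun := P2
  map_one' := by simp [P2]
  map_mul' s t := by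
    simp only [P2, mul_re, mul_im]
    linear_combination (-(s.im * t.im)) * Complex.I_sq
  map_zero' := by simp [P2]
  map_add' s t := by simp only [P2, add_re, add_im]; ring

theorem P1Hom_dag3 (w : BC) : P1Hom (dag3 w) = conj (P1Hom w) := by
  simp [P1, dag3]

theorem P2Hom_dag3 (w : BC) : P2Hom (dag3 w) = conj (P2Hom w) := by
  simp [P2, dag3]

theorem P1Hom_C1Hom (z : ℂ) : P1Hom (C1Hom z) = z := by
  simp [P1, C1]

theorem P2Hom_C1Hom (z : ℂ) : P2Hom (C1Hom z) = z := by
  simp [P2, C1]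

theorem enorm_sq (w : BC) : enorm w ^ 2 = (‖P1 w‖ ^ 2 + ‖P2 w‖ ^ 2) / 2 := by
  rw [enorm, Real.sq_sqrt (by positivity)]
  simp only [Complex.sq_norm, Complex.normSq_apply, P1, P2, Complex.sub_re, Complex.sub_im,
    Complex.add_re, Complex.add_im, Complex.mul_re, Complex.mul_im, Complex.I_re, Complex.I_im]
  ring

end BC

namespace BCInner

open ComplexConjugate

variable {M : Type*} [AddCommGroup M] [Module BC M] (S : BCInner M)

theorem add_left (ψ φ χ : M) : S.inner (ψ + φ) χ = S.inner ψ χ + S.inner φ χ := by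
  rw [S.conj_symm, S.add_right, BC.dag3_add, ← S.conj_symm, ← S.conj_symm]

theorem smul_left (s : BC) (ψ φ : M) : S.inner (s • ψ) φ = BC.dag3 s * S.inner ψ φ := by
  rw [S.conj_symm, S.smul_right, BC.dag3_mul, ← S.conj_symm]

theorem norm_sq_le_of_ringHom (p : BC →+* ℂ) (hdag : ∀ w, p (BC.dag3 w) = conj (p w))
    (hC1 : ∀ z, p (BC.C1Hom z) = z) (hpos : ∀ χ : M, 0 ≤ (p (S.inner χ χ)).re) (ψ φ : M) :
    ‖p (S.inner ψ φ)‖ ^ 2 ≤ (p (S.inner ψ ψ)).re * (p (S.inner φ φ)).re := by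
  let _ : Module ℂ M := Module.compHom M BC.C1Hom
  let _ : PreInnerProductSpace.Core ℂ M :=
    { inner := fun x y => p (S.inner x y)
      conj_inner_symm := fun x y => by rw [← hdag, ← S.conj_symm]
      re_inner_nonneg := hpos
      add_left := fun x y z => by simp only [S.add_left, map_add]
      smul_left := fun x y z => by
        change p (S.inner (BC.C1Hom z • x) y) = _
        rw [S.smul_left, map_mul, hdag, hC1] }
  have hsymm : ‖p (S.inner φ ψ)‖ = ‖p (S.inner ψ φ)‖ := by
    rw [S.conj_symm φ, hdag, Complex.norm_conj]
  have h := InnerProductSpace.Core.inner_mul_inner_self_le (𝕜 := ℂ) ψ φ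
  change ‖p (S.inner ψ φ)‖ * ‖p (S.inner φ ψ)‖ ≤ (p (S.inner ψ ψ)).re * (p (S.inner φ φ)).re at h
  rwa [hsymm, ← sq] at h

theorem bnorm_nonneg (φ : M) : 0 ≤ bnorm S φ := by
  unfold bnorm
  positivity

theorem bnorm_sq (φ : M) :
    bnorm S φ ^ 2 = ((BC.P1 (S.inner φ φ)).re + (BC.P2 (S.inner φ φ)).re) / 2 := by
  rw [bnorm, mul_pow, Real.sq_sqrt, one_div, inv_pow, Real.sq_sqrt zero_le_two, inv_mul_eq_div]
  exact add_nonneg (S.hyper_pos φ).2.1 (S.hyper_pos φ).2.2.2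

end BCInner

/-- the bicomplex Schwarz inequality `|⟨ψ|φ⟩| ≤ √2 ‖ψ‖ ‖φ‖`. -/
theorem bicomplex_schwarz_inequality {M : Type*} [AddCommGroup M] [Module BC M]
    (S : BCInner M) (ψ φ : M) :
    BC.enorm (S.inner ψ φ) ≤ Real.sqrt 2 * bnorm S ψ * bnorm S φ := by
  have h1 := S.norm_sq_le_of_ringHom BC.P1Hom BC.P1Hom_dag3 BC.P1Hom_C1Hom
    (fun χ => (S.hyper_pos χ).2.1) ψ φ
  have h2 := S.norm_sq_le_of_ringHom BC.P2Hom BC.P2Hom_dag3 BC.P2Hom_C1Hom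
    (fun χ => (S.hyper_pos χ).2.2.2) ψ φ
  simp only [BC.P1Hom_apply, BC.P2Hom_apply] at h1 h2
  obtain ⟨-, ha₁, -, ha₂⟩ := S.hyper_pos ψ
  obtain ⟨-, hb₁, -, hb₂⟩ := S.hyper_pos φ
  refine le_of_pow_le_pow_left₀ two_ne_zero
    (mul_nonneg (mul_nonneg (Real.sqrt_nonneg 2) (S.bnorm_nonneg ψ)) (S.bnorm_nonneg φ)) ?_
  rw [BC.enorm_sq, mul_pow, mul_pow, Real.sq_sqrt zero_le_two, S.bnorm_sq, S.bnorm_sq]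
  nlinarith [mul_nonneg ha₁ hb₂, mul_nonneg ha₂ hb₁]
end

section
/- The space l²₂ of bicomplex sequences {w_l} with Σ|w_l|² < ∞ (with |·| the Euclidean norm on bicomplex numbers) is a bicomplex Hilbert space; moreover its ℓ²-norm ‖{w_l}‖₂ = (Σ|w_l|²)^{1/2} coincides with the induced bicomplex Hilbert norm coming from the decomposition (l²₂)' = (e₁ℓ²) ⊕ (e₂ℓ²). -/
/-- Topology on the bicomplex numbers induced from `ℂ × ℂ` (the Euclidean topology). -/
noncomputable instance : TopologicalSpace BC :=
  TopologicalSpace.induced (fun w => (w.re, w.im)) inferInstance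

/-!
Sending `w = z₁ + z₂ i₂` to `(z₁, z₂) ∈ WithLp 2 (ℂ × ℂ)` turns the Euclidean norm `|w|` into the
Hilbert norm of `ℂ²`, so `l²₂` is the Hilbert space `ℓ²(ℕ, ℂ²)`; closure under addition and
completeness are inherited from `lp`. Multiplication by `s = s₁ + s₂ i₂` is `s₁ w + s₂ (i₂ w)`, a sum
of two complex scalings composed with the isometry `w ↦ i₂ w`. The two `ℂ(i₁)`-components of
`w^{†₃} v` are the `ℂ²`-inner products `⟪w, v⟫` and `-⟪w, i₂ v⟫`, which makes the scalar product
series converge; and `Re P1 + Re P2` of a bicomplex number is twice the real part of its first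
component, which for `Σ w_l^{†₃} w_l` is `2 Σ |w_l|²`.
-/

open Filter Topology

namespace BC

def toProd : BC →+ ℂ × ℂ where
  toFun w := (w.re, w.im)
  map_zero' := rfl
  map_add' _ _ := rfl

theorem isInducing_toProd : IsInducing toProd := ⟨rfl⟩

theorem hasSum_iff {ι : Type*} {f : ι → BC} {a : BC} :
    HasSum f a ↔ HasSum (fun l => (f l).re) a.re ∧ HasSum (fun l => (f l).im) a.im := by
  refine ⟨fun h => ?_, fun h => (isInducing_toProd.hasSum_iff f a).1 (h.1.prodMk h.2)⟩
  have h' := h.map toProd isInducing_toProd.continuous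
  exact ⟨h'.map (AddMonoidHom.fst ℂ ℂ) continuous_fst, h'.map (AddMonoidHom.snd ℂ ℂ) continuous_snd⟩

instance : T2Space BC :=
  T2Space.of_injective_continuous (fun _ _ h => BC.ext (congrArg Prod.fst h) (congrArg Prod.snd h))
    isInducing_toProd.continuous

theorem re_tsum {ι : Type*} {f : ι → BC} (hf : Summable f) : (∑' l, f l).re = ∑' l, (f l).re :=
  ((hasSum_iff.1 hf.hasSum).1.tsum_eq).symm

@[simp] theorem sub_re (s t : BC) : (s - t).re = s.re - t.re := by
  rw [sub_eq_add_neg, add_re, neg_re, sub_eq_add_neg]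

@[simp] theorem sub_im (s t : BC) : (s - t).im = s.im - t.im := by
  rw [sub_eq_add_neg, add_im, neg_im, sub_eq_add_neg]

def toL2 (w : BC) : WithLp 2 (ℂ × ℂ) := WithLp.toLp 2 (w.re, w.im)

def ofL2 (x : WithLp 2 (ℂ × ℂ)) : BC := ⟨x.fst, x.snd⟩

theorem toL2_add (s t : BC) : toL2 (s + t) = toL2 s + toL2 t := rfl

theorem toL2_sub (s t : BC) : toL2 (s - t) = toL2 s - toL2 t := by
  simp [toL2]; rfl

theorem enorm_eq_norm_toL2 (w : BC) : enorm w = ‖toL2 w‖ := by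
  rw [WithLp.prod_norm_eq_of_L2]; rfl

theorem enorm_add_le (s t : BC) : enorm (s + t) ≤ enorm s + enorm t := by
  simp only [enorm_eq_norm_toL2]
  exact norm_add_le (toL2 s) (toL2 t)

theorem enorm_C1_mul (z : ℂ) (w : BC) : enorm (C1 z * w) = ‖z‖ * enorm w := by
  rw [enorm_eq_norm_toL2, enorm_eq_norm_toL2, ← norm_smul]
  congr 1
  simp [toL2, C1, ← WithLp.toLp_smul]

theorem enorm_i2_mul (w : BC) : enorm (i2 * w) = enorm w := by
  simp [enorm, i2, add_comm]

theorem enorm_mul_le (s w : BC) : enorm (s * w) ≤ (‖s.re‖ + ‖s.im‖) * enorm w := by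
  have hs : s * w = C1 s.re * w + C1 s.im * (i2 * w) := by
    ext <;> simp [C1, i2]; ring
  calc enorm (s * w) ≤ enorm (C1 s.re * w) + enorm (C1 s.im * (i2 * w)) :=
        hs ▸ enorm_add_le _ _
    _ = (‖s.re‖ + ‖s.im‖) * enorm w := by
        rw [enorm_C1_mul, enorm_C1_mul, enorm_i2_mul, add_mul]

theorem inner_toL2 (w v : BC) : inner ℂ (toL2 w) (toL2 v) = (dag3 w * v).re := by
  simp [toL2, dag3]; ring

theorem inner_toL2_i2_mul (w v : BC) : inner ℂ (toL2 w) (toL2 (i2 * v)) = -(dag3 w * v).im := by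
  simp [toL2, dag3, i2]; ring

theorem dag3_mul_self_re (w : BC) : (dag3 w * w).re = ((enorm w ^ 2 : ℝ) : ℂ) := by
  rw [← inner_toL2, inner_self_eq_norm_sq_to_K, enorm_eq_norm_toL2]
  push_cast; rfl

theorem P1_re_add_P2_re (w : BC) : (P1 w).re + (P2 w).re = 2 * w.re.re := by
  simp [P1, P2]; ring

end BC

theorem memℓp_two_iff {ι E : Type*} [NormedAddCommGroup E] {f : ι → E} :
    Memℓp f 2 ↔ Summable fun i => ‖f i‖ ^ 2 := by
  rw [memℓp_gen_iff (by norm_num)]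
  norm_num

theorem lp.norm_two_eq {ι E : Type*} [NormedAddCommGroup E] (f : lp (fun _ : ι => E) 2) :
    ‖f‖ = √(∑' i, ‖f i‖ ^ 2) := by
  rw [lp.norm_eq_tsum_rpow (by norm_num), Real.sqrt_eq_rpow]
  norm_num

namespace BC

theorem memℓp_toL2_iff {w : ℕ → BC} :
    Memℓp (fun l => toL2 (w l)) 2 ↔ Summable fun l => enorm (w l) ^ 2 := by
  simp only [memℓp_two_iff, enorm_eq_norm_toL2]

def toLp2 (w : ℕ → BC) (hw : Summable fun l => enorm (w l) ^ 2) :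
    lp (fun _ : ℕ => WithLp 2 (ℂ × ℂ)) 2 :=
  ⟨fun l => toL2 (w l), memℓp_toL2_iff.2 hw⟩

theorem norm_toLp2_sub {w v : ℕ → BC} (hw : Summable fun l => enorm (w l) ^ 2)
    (hv : Summable fun l => enorm (v l) ^ 2) :
    ‖toLp2 w hw - toLp2 v hv‖ = √(∑' l, enorm (w l - v l) ^ 2) := by
  simp only [lp.norm_two_eq, enorm_eq_norm_toL2, toL2_sub]
  rfl

theorem summable_enorm_add_sq {w v : ℕ → BC} (hw : Summable fun l => enorm (w l) ^ 2)
    (hv : Summable fun l => enorm (v l) ^ 2) :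
    Summable fun l => enorm (w l + v l) ^ 2 := by
  have h := (memℓp_toL2_iff.2 hw).add (memℓp_toL2_iff.2 hv)
  rw [← memℓp_toL2_iff]
  simp only [toL2_add]
  exact h

theorem summable_enorm_mul_sq (s : BC) {w : ℕ → BC} (hw : Summable fun l => enorm (w l) ^ 2) :
    Summable fun l => enorm (s * w l) ^ 2 :=
  hw.mul_left ((‖s.re‖ + ‖s.im‖) ^ 2) |>.of_nonneg_of_le (fun _ => sq_nonneg _) fun l =>
    (pow_le_pow_left₀ (Real.sqrt_nonneg _) (enorm_mul_le s (w l)) 2).trans_eq (mul_pow _ _ _)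

theorem summable_dag3_mul {w v : ℕ → BC} (hw : Summable fun l => enorm (w l) ^ 2)
    (hv : Summable fun l => enorm (v l) ^ 2) :
    Summable fun l => dag3 (w l) * v l := by
  have hre := lp.summable_inner (𝕜 := ℂ) (toLp2 w hw) (toLp2 v hv)
  have him := lp.summable_inner (𝕜 := ℂ) (toLp2 w hw) (toLp2 _ (summable_enorm_mul_sq i2 hv))
  simp only [toLp2, inner_toL2] at hre
  simp only [toLp2, inner_toL2_i2_mul, summable_neg_iff] at him
  exact ⟨⟨_, _⟩, hasSum_iff.2 ⟨hre.hasSum, him.hasSum⟩⟩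

theorem tsum_dag3_mul_self_re_re {w : ℕ → BC} (hw : Summable fun l => enorm (w l) ^ 2) :
    (∑' l, dag3 (w l) * w l).re.re = ∑' l, enorm (w l) ^ 2 := by
  rw [re_tsum (summable_dag3_mul hw hw)]
  simp only [dag3_mul_self_re, ← Complex.ofReal_tsum, Complex.ofReal_re]

theorem sqrt_tsum_enorm_sq_eq {w : ℕ → BC} (hw : Summable fun l => enorm (w l) ^ 2) :
    √(∑' l, enorm (w l) ^ 2) =
      1 / √2 * √((P1 (∑' l, dag3 (w l) * w l)).re + (P2 (∑' l, dag3 (w l) * w l)).re) := by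
  rw [P1_re_add_P2_re, tsum_dag3_mul_self_re_re hw, Real.sqrt_mul zero_le_two, ← mul_assoc,
    one_div_mul_cancel (by positivity), one_mul]

theorem exists_tendsto_of_cauchy (f : ℕ → ℕ → BC)
    (hf : ∀ n, Summable fun l => enorm (f n l) ^ 2)
    (hc : ∀ ε > 0, ∃ N : ℕ, ∀ i ≥ N, ∀ j ≥ N, √(∑' l, enorm (f i l - f j l) ^ 2) < ε) :
    ∃ w : ℕ → BC, (Summable fun l => enorm (w l) ^ 2) ∧
      Tendsto (fun n => √(∑' l, enorm (f n l - w l) ^ 2)) atTop (𝓝 0) := by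
  let F n := toLp2 (f n) (hf n)
  have hF : CauchySeq F := Metric.cauchySeq_iff'.2 fun ε hε => by
    obtain ⟨N, hN⟩ := hc ε hε
    exact ⟨N, fun n hn => by simpa [F, dist_eq_norm, norm_toLp2_sub] using hN n hn N le_rfl⟩
  obtain ⟨g, hg⟩ := cauchySeq_tendsto_of_complete hF
  have hw : Summable fun l => enorm (ofL2 (g l)) ^ 2 := memℓp_toL2_iff.1 (lp.memℓp g)
  refine ⟨fun l => ofL2 (g l), hw, ?_⟩
  have hdist n : ‖F n - g‖ = √(∑' l, enorm (f n l - ofL2 (g l)) ^ 2) :=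
    norm_toLp2_sub (w := f n) (v := fun l => ofL2 (g l)) (hf n) hw
  simpa only [hdist] using tendsto_iff_norm_sub_tendsto_zero.1 hg

end BC

/-- the space `l²₂` of square-summable bicomplex sequences is a bicomplex
Hilbert space, and its `ℓ²`-norm coincides with the induced bicomplex Hilbert norm. -/
theorem bicomplex_l22_hilbert :
    -- closure under addition and bicomplex scalar multiplication (module structure)
    (∀ w v : ℕ → BC, (Summable fun l => (BC.enorm (w l)) ^ 2) →
      (Summable fun l => (BC.enorm (v l)) ^ 2) →
      Summable fun l => (BC.enorm (w l + v l)) ^ 2) ∧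
    (∀ (s : BC) (w : ℕ → BC), (Summable fun l => (BC.enorm (w l)) ^ 2) →
      Summable fun l => (BC.enorm (s * w l)) ^ 2) ∧
    -- the bicomplex scalar product `⟨w|v⟩ = Σ (w_l)^{†₃} v_l` is defined on `l²₂`
    (∀ w v : ℕ → BC, (Summable fun l => (BC.enorm (w l)) ^ 2) →
      (Summable fun l => (BC.enorm (v l)) ^ 2) →
      Summable fun l => BC.dag3 (w l) * v l) ∧
    -- the ℓ²-norm coincides with the induced bicomplex norm `(1/√2)√(|φ₁|₁² + |φ₂|₂²)`
    (∀ w : ℕ → BC, (Summable fun l => (BC.enorm (w l)) ^ 2) →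
      Real.sqrt (∑' l, (BC.enorm (w l)) ^ 2) =
        (1 / Real.sqrt 2) *
          Real.sqrt ((BC.P1 (∑' l, BC.dag3 (w l) * w l)).re +
            (BC.P2 (∑' l, BC.dag3 (w l) * w l)).re)) ∧
    -- completeness of `l²₂` for the ℓ²-norm
    (∀ f : ℕ → (ℕ → BC), (∀ n, Summable fun l => (BC.enorm (f n l)) ^ 2) →
      (∀ ε > 0, ∃ N : ℕ, ∀ i ≥ N, ∀ j ≥ N,
        Real.sqrt (∑' l, (BC.enorm (f i l - f j l)) ^ 2) < ε) →
      ∃ w : ℕ → BC, (Summable fun l => (BC.enorm (w l)) ^ 2) ∧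
        Filter.Tendsto (fun n => Real.sqrt (∑' l, (BC.enorm (f n l - w l)) ^ 2))
          Filter.atTop (nhds 0)) :=
  ⟨fun _ _ => BC.summable_enorm_add_sq,
   fun s _ => BC.summable_enorm_mul_sq s,
   fun _ _ => BC.summable_dag3_mul,
   fun _ => BC.sqrt_tsum_enorm_sq_eq,
   BC.exists_tendsto_of_cauchy⟩
end
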